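/- arXiv:1712.07554 — 5 statements merged into one kernel-verified Lean document; each statement's English description precedes it below -/
import Mathlib

section
/- There are no integers $a, b$ with $a \geq 0$ such that the set of rational numbers $\{b+1,\; \tfrac{1}{3}(a+1)+(b+1),\; \tfrac{1}{2}(a+1)+(b+1),\; \tfrac{2}{3}(a+1)+(b+1),\; (a+1)+(b+1)\}$ equals $\{1,2,3,4,5\}$. -/
theorem stmt1 :
    ¬ ∃ a b : ℤ, 0 ≤ a ∧
      ({(b:ℚ) + 1, (1/3) * ((a:ℚ) + 1) + ((b:ℚ) + 1), (1/2) * ((a:ℚ) + 1) + ((b:ℚ) + 1),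
        (2/3) * ((a:ℚ) + 1) + ((b:ℚ) + 1), ((a:ℚ) + 1) + ((b:ℚ) + 1)} : Set ℚ)
      = {1, 2, 3, 4, 5} := by
  rintro ⟨a, b, ha, heq⟩
  have h1 : ((b:ℚ) + 1) ∈ ({1, 2, 3, 4, 5} : Set ℚ) := by
    rw [← heq]; left; rfl
  have h2 : (((a:ℚ) + 1) + ((b:ℚ) + 1)) ∈ ({1, 2, 3, 4, 5} : Set ℚ) := by
    rw [← heq]; right; right; right; right; rfl
  have h3 : ((1:ℚ)/3 * ((a:ℚ) + 1) + ((b:ℚ) + 1)) ∈ ({1, 2, 3, 4, 5} : Set ℚ) := by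
    rw [← heq]; right; left; rfl
  have h4 : ((1:ℚ)/2 * ((a:ℚ) + 1) + ((b:ℚ) + 1)) ∈ ({1, 2, 3, 4, 5} : Set ℚ) := by
    rw [← heq]; right; right; left; rfl
  simp only [Set.mem_insert_iff, Set.mem_singleton_iff] at h1 h2 h3 h4
  have hb0 : (0:ℤ) ≤ b := by
    have : (0:ℚ) ≤ (b:ℚ) := by rcases h1 with h | h | h | h | h <;> linarith
    exact_mod_cast this
  have hab : a + b ≤ 3 := by
    have : (a:ℚ) + (b:ℚ) ≤ 3 := by rcases h2 with h | h | h | h | h <;> linarith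
    exact_mod_cast this
  have hd3 : ∃ k : ℤ, a + 1 = 3 * k := by
    rcases h3 with h | h | h | h | h
    · exact ⟨-b, by have : (a:ℚ) + 1 = 3 * (-b : ℤ) := by push_cast; linarith
                    exact_mod_cast this⟩
    · exact ⟨1 - b, by have : (a:ℚ) + 1 = 3 * ((1 - b : ℤ) : ℚ) := by push_cast; linarith
                       exact_mod_cast this⟩
    · exact ⟨2 - b, by have : (a:ℚ) + 1 = 3 * ((2 - b : ℤ) : ℚ) := by push_cast; linarith
                       exact_mod_cast this⟩
    · exact ⟨3 - b, by have : (a:ℚ) + 1 = 3 * ((3 - b : ℤ) : ℚ) := by push_cast; linarith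
                       exact_mod_cast this⟩
    · exact ⟨4 - b, by have : (a:ℚ) + 1 = 3 * ((4 - b : ℤ) : ℚ) := by push_cast; linarith
                       exact_mod_cast this⟩
  have hd2 : ∃ k : ℤ, a + 1 = 2 * k := by
    rcases h4 with h | h | h | h | h
    · exact ⟨-b, by have : (a:ℚ) + 1 = 2 * (-b : ℤ) := by push_cast; linarith
                    exact_mod_cast this⟩
    · exact ⟨1 - b, by have : (a:ℚ) + 1 = 2 * ((1 - b : ℤ) : ℚ) := by push_cast; linarith
                       exact_mod_cast this⟩
    · exact ⟨2 - b, by have : (a:ℚ) + 1 = 2 * ((2 - b : ℤ) : ℚ) := by push_cast; linarith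
                       exact_mod_cast this⟩
    · exact ⟨3 - b, by have : (a:ℚ) + 1 = 2 * ((3 - b : ℤ) : ℚ) := by push_cast; linarith
                       exact_mod_cast this⟩
    · exact ⟨4 - b, by have : (a:ℚ) + 1 = 2 * ((4 - b : ℤ) : ℚ) := by push_cast; linarith
                       exact_mod_cast this⟩
  obtain ⟨k, hk⟩ := hd3
  obtain ⟨m, hm⟩ := hd2
  omega
end

section
/- The unique tuple of nonnegative integers $(b,c,d,e,f)$ together with an integer $a$ for which the set $\{a+2b+2c+3d+2e+f+11,\; a+b+2c+3d+2e+f+10,\; a+b+2c+2d+2e+f+9,\; a+b+2c+2d+e+f+8,\; a+b+2c+2d+e+7,\; a+b+c+2d+2e+f+8,\; a+b+c+2d+e+f+7,\; a+b+c+2d+e+6,\; a+b+c+d+e+f+6,\; a+b+c+d+e+5,\; a+b+c+d+4,\; a+1,\; a+c+2,\; a+c+d+3,\; a+c+d+e+4,\; a+c+d+e+f+5\}$ equals $\{1,2,\dots,16\}$ is $(a,b,c,d,e,f) = (0,0,0,0,1,3)$. -/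
set_option maxHeartbeats 2000000 in
theorem stmt2 (a b c d e f : ℤ) (hb : 0 ≤ b) (hc : 0 ≤ c) (hd : 0 ≤ d)
    (he : 0 ≤ e) (hf : 0 ≤ f) :
    ({a+2*b+2*c+3*d+2*e+f+11, a+b+2*c+3*d+2*e+f+10, a+b+2*c+2*d+2*e+f+9, a+b+2*c+2*d+e+f+8, a+b+2*c+2*d+e+7, a+b+c+2*d+2*e+f+8, a+b+c+2*d+e+f+7, a+b+c+2*d+e+6, a+b+c+d+e+f+6, a+b+c+d+e+5, a+b+c+d+4, a+1, a+c+2, a+c+d+3, a+c+d+e+4, a+c+d+e+f+5} : Set ℤ) = Set.Icc 1 16 ↔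
      (a = 0 ∧ b = 0 ∧ c = 0 ∧ d = 0 ∧ e = 1 ∧ f = 3) := by
  constructor
  · intro h
    have H := Set.ext_iff.mp h
    simp only [Set.mem_insert_iff, Set.mem_singleton_iff, Set.mem_Icc] at H
    have hA := H (a+1)
    have hB := H (a+2*b+2*c+3*d+2*e+f+11)
    have h1 := H 1
    have h16 := H 16
    have ha : a = 0 := by omega
    have hS : 2*b+2*c+3*d+2*e+f = 5 := by omega
    have hb2 : b ≤ 2 := by omega
    have hc2 : c ≤ 2 := by omega
    have hd1 : d ≤ 1 := by omega
    have he2 : e ≤ 2 := by omega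
    have hf5 : f ≤ 5 := by omega
    subst ha
    clear hA hB h1 h16 h
    interval_cases b <;> interval_cases c <;> interval_cases d <;>
      interval_cases e <;> interval_cases f <;>
      (try exact ⟨rfl, rfl, rfl, rfl, rfl, rfl⟩) <;>
      · exfalso
        have h2 := H 2; have h3 := H 3; have h4 := H 4; have h5 := H 5
        have h6 := H 6; have h7 := H 7; have h8 := H 8; have h9 := H 9
        have h10 := H 10; have h11 := H 11; have h12 := H 12
        have h13 := H 13; have h14 := H 14; have h15 := H 15
        omega
  · rintro ⟨rfl, rfl, rfl, rfl, rfl, rfl⟩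
    ext x
    simp only [Set.mem_insert_iff, Set.mem_singleton_iff, Set.mem_Icc]
    omega
end

section
/- There are no nonnegative integers $a, b, d$ and integer $c \geq 0$ such that the set of rational numbers $\{c+1,\; b+c+2,\; c+d+2,\; b+c+\tfrac{1}{2}d+\tfrac{5}{2},\; b+c+d+3,\; 2b+c+3,\; a+b+c+3,\; \tfrac{1}{2}a+b+c+\tfrac{1}{2}d+3,\; \tfrac{2}{3}a+\tfrac{4}{3}b+c+\tfrac{1}{3}d+\tfrac{10}{3},\; \tfrac{1}{2}a+\tfrac{3}{2}b+c+\tfrac{1}{2}d+\tfrac{7}{2},\; a+b+c+\tfrac{1}{2}d+\tfrac{7}{2},\; \tfrac{2}{3}a+\tfrac{4}{3}b+c+\tfrac{2}{3}d+\tfrac{11}{3},\; 2b+c+d+4,\; a+2b+c+4,\; a+b+c+d+4,\; a+\tfrac{3}{2}b+c+\tfrac{1}{2}d+4,\; a+2b+c+\tfrac{1}{2}d+\tfrac{9}{2},\; a+2b+c+d+5,\; 2a+2b+c+5,\; 2a+2b+c+d+6\}$ equals $\{1,2,\dots,20\}$. -/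
set_option maxHeartbeats 1000000


theorem stmt6 :
    ¬ ∃ a b c d : ℤ, 0 ≤ a ∧ 0 ≤ b ∧ 0 ≤ c ∧ 0 ≤ d ∧
      ({(c:ℚ)+1, (b:ℚ)+c+2, (c:ℚ)+d+2, (b:ℚ)+c+(1/2)*d+5/2, (b:ℚ)+c+d+3, 2*(b:ℚ)+c+3, (a:ℚ)+b+c+3, (1/2)*(a:ℚ)+b+c+(1/2)*d+3, (2/3)*(a:ℚ)+(4/3)*b+c+(1/3)*d+10/3, (1/2)*(a:ℚ)+(3/2)*b+c+(1/2)*d+7/2, (a:ℚ)+b+c+(1/2)*d+7/2, (2/3)*(a:ℚ)+(4/3)*b+c+(2/3)*d+11/3, 2*(b:ℚ)+c+d+4, (a:ℚ)+2*b+c+4, (a:ℚ)+b+c+d+4, (a:ℚ)+(3/2)*b+c+(1/2)*d+4, (a:ℚ)+2*b+c+(1/2)*d+9/2, (a:ℚ)+2*b+c+d+5, 2*(a:ℚ)+2*b+c+5, 2*(a:ℚ)+2*b+c+d+6} : Set ℚ) = {1, 2, 3, 4, 5, 6, 7, 8, 9, 10, 11, 12, 13, 14, 15, 16, 17, 18,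 19, 20} := by
  rintro ⟨a, b, c, d, ha, hb, hc, hd, h⟩
  have ha' : (0:ℚ) ≤ (a:ℚ) := by exact_mod_cast ha
  have hb' : (0:ℚ) ≤ (b:ℚ) := by exact_mod_cast hb
  have hc' : (0:ℚ) ≤ (c:ℚ) := by exact_mod_cast hc
  have hd' : (0:ℚ) ≤ (d:ℚ) := by exact_mod_cast hd
  -- 1 is in the LHS set, forcing c = 0
  have h1 : (1:ℚ) ∈ ({(c:ℚ)+1, (b:ℚ)+c+2, (c:ℚ)+d+2, (b:ℚ)+c+(1/2)*d+5/2, (b:ℚ)+c+d+3, 2*(b:ℚ)+c+3, (a:ℚ)+b+c+3, (1/2)*(a:ℚ)+b+c+(1/2)*d+3, (2/3)*(a:ℚ)+(4/3)*b+c+(1/3)*d+10/3, (1/2)*(a:ℚ)+(3/2)*b+c+(1/2)*d+7/2, (a:ℚ)+b+c+(1/2)*d+7/2, (2/3)*(a:ℚ)+(4/3)*b+c+(2/3)*d+11/3, 2*(b:ℚ)+c+d+4, (a:ℚ)+2*b+c+4, (a:ℚ)+b+c+d+4, (a:ℚ)+(3/2)*b+c+(1/2)*d+4, (a:ℚ)+2*b+c+(1/2)*d+9/2,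 (a:ℚ)+2*b+c+d+5, 2*(a:ℚ)+2*b+c+5, 2*(a:ℚ)+2*b+c+d+6} : Set ℚ) := by
    rw [h]; left; trivial
  simp only [Set.mem_insert_iff, Set.mem_singleton_iff] at h1
  have hczero : (c:ℚ) = 0 := by
    rcases h1 with h1|h1|h1|h1|h1|h1|h1|h1|h1|h1|h1|h1|h1|h1|h1|h1|h1|h1|h1|h1 <;> linarith
  -- the max element is ≤ 20
  have h2 : (2*(a:ℚ)+2*b+c+d+6) ∈ ({1, 2, 3, 4, 5, 6, 7, 8, 9, 10, 11, 12, 13, 14, 15, 16, 17, 18, 19, 20} : Set ℚ) := by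
    rw [← h]
    simp only [Set.mem_insert_iff, Set.mem_singleton_iff]
    iterate 19 right
    trivial
  simp only [Set.mem_insert_iff, Set.mem_singleton_iff] at h2
  have hmax : 2*(a:ℚ)+2*b+c+d+6 ≤ 20 := by
    rcases h2 with h2|h2|h2|h2|h2|h2|h2|h2|h2|h2|h2|h2|h2|h2|h2|h2|h2|h2|h2|h2 <;> linarith
  -- 20 is in the LHS set; only the max can be 20
  have h3 : (20:ℚ) ∈ ({(c:ℚ)+1, (b:ℚ)+c+2, (c:ℚ)+d+2, (b:ℚ)+c+(1/2)*d+5/2, (b:ℚ)+c+d+3, 2*(b:ℚ)+c+3, (a:ℚ)+b+c+3, (1/2)*(a:ℚ)+b+c+(1/2)*d+3, (2/3)*(a:ℚ)+(4/3)*b+c+(1/3)*d+10/3, (1/2)*(a:ℚ)+(3/2)*b+c+(1/2)*d+7/2, (a:ℚ)+b+c+(1/2)*d+7/2, (2/3)*(a:ℚ)+(4/3)*b+c+(2/3)*d+11/3, 2*(b:ℚ)+c+d+4, (a:ℚ)+2*b+c+4, (a:ℚ)+b+c+d+4, (a:ℚ)+(3/2)*b+c+(1/2)*d+4, (a:ℚ)+2*b+c+(1/2)*d+9/2,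 (a:ℚ)+2*b+c+d+5, 2*(a:ℚ)+2*b+c+5, 2*(a:ℚ)+2*b+c+d+6} : Set ℚ) := by
    rw [h]
    simp only [Set.mem_insert_iff, Set.mem_singleton_iff]
    iterate 19 right
    trivial
  simp only [Set.mem_insert_iff, Set.mem_singleton_iff] at h3
  have hmax20 : 2*(a:ℚ)+2*b+c+d+6 = 20 := by
    rcases h3 with h3|h3|h3|h3|h3|h3|h3|h3|h3|h3|h3|h3|h3|h3|h3|h3|h3|h3|h3|h3 <;> linarith
  -- now a+b+c+(1/2)d+7/2 = 21/2, which is not an integer in 1..20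
  have h4 : ((a:ℚ)+b+c+(1/2)*d+7/2) ∈ ({1, 2, 3, 4, 5, 6, 7, 8, 9, 10, 11, 12, 13, 14, 15, 16, 17, 18, 19, 20} : Set ℚ) := by
    rw [← h]
    simp only [Set.mem_insert_iff, Set.mem_singleton_iff]
    iterate 10 right
    left; trivial
  simp only [Set.mem_insert_iff, Set.mem_singleton_iff] at h4
  rcases h4 with h4|h4|h4|h4|h4|h4|h4|h4|h4|h4|h4|h4|h4|h4|h4|h4|h4|h4|h4|h4 <;> linarith
end

section
/- There are no integers $a,b,c,d,e,f,g$ with $b,c,d,e,f,g \geq 0$ such that the set of the twenty-seven integers $\{b+d+e+f+g+5,\; b+c+d+e+f+g+6,\; b+c+2d+e+f+g+7,\; b+c+2d+2e+f+g+8,\; b+c+2d+2e+2f+g+9,\; c+d+e+f+g+5,\; d+e+f+g+4,\; e+f+g+3,\; f+g+2,\; g+1,\; 2a+2b+3c+4d+3e+2f+g+17,\; a+2b+3c+4d+3e+2f+g+16,\; a+2b+2c+4d+3e+2f+g+15,\; a+2b+2c+3d+3e+2f+g+14,\; a+2b+2c+3d+2e+2f+g+13,\; a+2b+2c+3d+2e+f+g+12,\;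 a+b+2c+3d+3e+2f+g+13,\; a+b+2c+3d+2e+2f+g+12,\; a+b+2c+3d+2e+f+g+11,\; a+b+2c+2d+2e+2f+g+11,\; a+b+2c+2d+2e+f+g+10,\; a+b+2c+2d+e+f+g+9,\; a+b+c+2d+2e+2f+g+10,\; a+b+c+2d+2e+f+g+9,\; a+b+c+2d+e+f+g+8,\; a+b+c+d+e+f+g+7,\; a+c+d+e+f+g+6\}$ equals $\{1,2,\dots,27\}$. -/
/-! Reduce modulo 2. The interval `[1, 27]` contains 14 odd integers, whereas for every parity
pattern of `a, …, g` the number of odd values among the 27 linear forms is one of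
0, 11, 12, 15, 16, 27. -/

theorem List.coe_eq_val_of_toFinset_eq {α : Type*} [DecidableEq α] {l : List α}
    {s : Finset α} (hs : l.toFinset = s) (hlen : l.length = s.card) :
    (l : Multiset α) = s.val := by
  have hnodup : l.Nodup := Multiset.coe_nodup.mp <|
    Multiset.toFinset_card_eq_card_iff_nodup.mp (by simpa [hs] using hlen.symm)
  rw [← hs, ← List.toFinset_eq hnodup]

def freudenthalForms {R : Type*} [Semiring R] (a b c d e f g : R) : List R :=
  [b+d+e+f+g+5, b+c+d+e+f+g+6, b+c+2*d+e+f+g+7, b+c+2*d+2*e+f+g+8, b+c+2*d+2*e+2*f+g+9,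
   c+d+e+f+g+5, d+e+f+g+4, e+f+g+3, f+g+2, g+1, 2*a+2*b+3*c+4*d+3*e+2*f+g+17,
   a+2*b+3*c+4*d+3*e+2*f+g+16, a+2*b+2*c+4*d+3*e+2*f+g+15, a+2*b+2*c+3*d+3*e+2*f+g+14,
   a+2*b+2*c+3*d+2*e+2*f+g+13, a+2*b+2*c+3*d+2*e+f+g+12, a+b+2*c+3*d+3*e+2*f+g+13,
   a+b+2*c+3*d+2*e+2*f+g+12, a+b+2*c+3*d+2*e+f+g+11, a+b+2*c+2*d+2*e+2*f+g+11,
   a+b+2*c+2*d+2*e+f+g+10, a+b+2*c+2*d+e+f+g+9, a+b+c+2*d+2*e+2*f+g+10, a+b+c+2*d+2*e+f+g+9,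
   a+b+c+2*d+e+f+g+8, a+b+c+d+e+f+g+7, a+c+d+e+f+g+6]

theorem map_freudenthalForms {R S : Type*} [Semiring R] [Semiring S] (φ : R →+* S)
    (a b c d e f g : R) :
    (freudenthalForms a b c d e f g).map φ =
      freudenthalForms (φ a) (φ b) (φ c) (φ d) (φ e) (φ f) (φ g) := by
  simp [freudenthalForms, map_ofNat]

theorem count_one_freudenthalForms_zmod_two_ne (a b c d e f g : ZMod 2) :
    (freudenthalForms a b c d e f g).count 1 ≠ 14 := by
  revert a b c d e f g
  decide

theorem stmt9 :
    ¬ ∃ a b c d e f g : ℤ, 0 ≤ b ∧ 0 ≤ c ∧ 0 ≤ d ∧ 0 ≤ e ∧ 0 ≤ f ∧ 0 ≤ g ∧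
      ({b+d+e+f+g+5, b+c+d+e+f+g+6, b+c+2*d+e+f+g+7, b+c+2*d+2*e+f+g+8, b+c+2*d+2*e+2*f+g+9, c+d+e+f+g+5, d+e+f+g+4, e+f+g+3, f+g+2, g+1, 2*a+2*b+3*c+4*d+3*e+2*f+g+17, a+2*b+3*c+4*d+3*e+2*f+g+16, a+2*b+2*c+4*d+3*e+2*f+g+15, a+2*b+2*c+3*d+3*e+2*f+g+14, a+2*b+2*c+3*d+2*e+2*f+g+13, a+2*b+2*c+3*d+2*e+f+g+12, a+b+2*c+3*d+3*e+2*f+g+13, a+b+2*c+3*d+2*e+2*f+g+12, a+b+2*c+3*d+2*e+f+g+11, a+b+2*c+2*d+2*e+2*f+g+11, a+b+2*c+2*d+2*e+f+g+10, a+b+2*c+2*d+e+f+g+9, a+b+c+2*d+2*e+2*f+g+10, a+b+c+2*d+2*e+f+g+9, a+b+c+2*d+e+f+g+8, a+b+c+d+e+f+g+7, a+c+d+e+f+g+6} : Set ℤ) = Set.Icc 1 27 := by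
  rintro ⟨a, b, c, d, e, f, g, -, -, -, -, -, -, hset⟩
  have hfinset : (freudenthalForms a b c d e f g).toFinset = Finset.Icc 1 27 := by
    apply Finset.coe_injective
    simpa only [freudenthalForms, List.toFinset_cons, List.toFinset_nil, insert_empty_eq,
      Finset.coe_insert, Finset.coe_singleton, Finset.coe_Icc] using hset
  have hval := List.coe_eq_val_of_toFinset_eq hfinset (by rfl)
  have hodd := congrArg (fun m => (m.map (Int.cast : ℤ → ZMod 2)).count 1) hval
  have hcount : ((Finset.Icc (1 : ℤ) 27).val.map (Int.cast : ℤ → ZMod 2)).count 1 = 14 := by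
    decide
  simp only [Multiset.map_coe, Multiset.coe_count, hcount] at hodd
  exact count_one_freudenthalForms_zmod_two_ne _ _ _ _ _ _ _ <|
    map_freudenthalForms (Int.castRingHom (ZMod 2)) a b c d e f g ▸ hodd
end

section
/- For nonnegative integers $a,\dots,h$ with $f = 0$: if $e = 0$ then $\tfrac{1}{2}a+b+c+\tfrac{3}{2}d+\tfrac{3}{2}e+f+\tfrac{1}{2}g+7$ and $\tfrac{1}{2}a+b+c+\tfrac{3}{2}d+e+f+\tfrac{1}{2}g+\tfrac{13}{2}$ are never both integers; and if $g = 0$ and $e = 1$ then $a+b+\tfrac{3}{2}c+2d+\tfrac{3}{2}e+f+\tfrac{1}{2}g+\tfrac{17}{2}$ being an integer forces $c$ even, while $\tfrac{1}{2}a+b+c+2d+\tfrac{3}{2}e+f+\tfrac{1}{2}g+\tfrac{15}{2}$ and $\tfrac{1}{2}a+b+\tfrac{3}{2}c+2d+\tfrac{3}{2}e+f+\tfrac{1}{2}g+8$ being both integers forces $c$ odd; hence no consistent choice exists. -/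
theorem stmt14 (a b c d e f g : ℤ) (ha : 0 ≤ a) (hb : 0 ≤ b) (hc : 0 ≤ c)
    (hd : 0 ≤ d) (he : 0 ≤ e) (hf : 0 ≤ f) (hg : 0 ≤ g) (hf0 : f = 0) :
    (e = 0 →
      ¬ ((∃ m : ℤ, (1/2)*(a:ℚ) + b + c + (3/2)*d + (3/2)*e + f + (1/2)*g + 7 = m) ∧
         (∃ n : ℤ, (1/2)*(a:ℚ) + b + c + (3/2)*d + e + f + (1/2)*g + 13/2 = n))) ∧
    (g = 0 → e = 1 →
      ((∃ m : ℤ, (a:ℚ) + b + (3/2)*c + 2*d + (3/2)*e + f + (1/2)*g + 17/2 = m) → Even c) ∧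
      (((∃ m : ℤ, (1/2)*(a:ℚ) + b + c + 2*d + (3/2)*e + f + (1/2)*g + 15/2 = m) ∧
        (∃ n : ℤ, (1/2)*(a:ℚ) + b + (3/2)*c + 2*d + (3/2)*e + f + (1/2)*g + 8 = n)) → Odd c)) := by
  subst hf0
  constructor
  · rintro he0 ⟨⟨m, hm⟩, ⟨n, hn⟩⟩
    subst he0
    have h : (2*m : ℚ) - 2*n = 1 := by push_cast; linarith
    have h2 : (2*m : ℤ) - 2*n = 1 := by exact_mod_cast h
    omega
  · rintro hg0 he1
    subst hg0; subst he1
    constructor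
    · rintro ⟨m, hm⟩
      have h : (2*m : ℚ) = 2*a + 2*b + 3*c + 4*d + 20 := by push_cast; linarith
      have h2 : (2*m : ℤ) = 2*a + 2*b + 3*c + 4*d + 20 := by exact_mod_cast h
      rw [Int.even_iff]; omega
    · rintro ⟨⟨m, hm⟩, ⟨n, hn⟩⟩
      have h : (2*m : ℚ) = a + 2*b + 2*c + 4*d + 18 := by push_cast; linarith
      have h' : (2*n : ℚ) = a + 2*b + 3*c + 4*d + 19 := by push_cast; linarith
      have h2 : (2*m : ℤ) = a + 2*b + 2*c + 4*d + 18 := by exact_mod_cast h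
      have h2' : (2*n : ℤ) = a + 2*b + 3*c + 4*d + 19 := by exact_mod_cast h'
      rw [Int.odd_iff]; omega
end
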